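/- For n qubits, any density operator ρ on (ℂ²)^⊗n satisfying the modified Hardy conditions (P(∀i: u_i=1) = q > 0; P(v_r = 1, u_{r+1} = 1) = 0 for all r cyclically; P(∀i: v_i = 2) = 0) is a unique pure state: ρ = |ψ⟩⟨ψ| where |ψ⟩ spans the 1-dimensional orthogonal complement of the (2^n − 1)-dimensional subspace S spanned by the product states associated with the zero-probability conditions, and q = |⟨ψ|φ_+⟩|² > 0 with |φ_+⟩ = |u_1=1⟩⋯|u_n=1⟩. -/

import Mathlib

/-!
Write `|y⟩ = ⊗ᵢ |v_i = y_i⟩` for the product basis and `b_y = ⟨y|w⟩`. Expanding `|u_{r+1} = 1⟩`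
in the `v`-basis, `w` is orthogonal to the zero-condition states iff `b_{2⋯2} = 0` and
`ᾱ_{r+1} b_x + β̄_{r+1} b_{x'} = 0` whenever `x_r = x_{r+1} = 1`, where `x'` is `x` with
`x_{r+1}` set to `2`. Going around the cycle, every `y ≠ 2⋯2` is reached from `1⋯1` by such
switches, so these vectors form at most a line. The line is spanned by the projection of
`|u_1 = 2⟩ ⋯ |u_n = 2⟩` away from `|2⋯2⟩`: it is orthogonal to every zero-condition state because
`⟨u = 1|u = 2⟩ = ⟨v = 1|v = 2⟩ = 0`, and its `|1⋯1⟩` coefficient is `∏ β̄_j ≠ 0`. A positive `ρ`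
with `⟨s|ρ|s⟩ = 0` kills `s`, so, being self-adjoint, it maps everything into that line, and
`Tr ρ = 1` then pins `ρ = |ψ⟩⟨ψ|`.
-/

/-- The product state `⊗ᵢ f i` of `n` qubits, as an element of `(ℂ²)^⊗n`
modeled by `EuclideanSpace ℂ (Fin n → Fin 2)`. -/
noncomputable def prodN {n : ℕ} (f : Fin n → EuclideanSpace ℂ (Fin 2)) :
    EuclideanSpace ℂ (Fin n → Fin 2) :=
  (WithLp.equiv 2 _).symm (fun x => ∏ i, f i (x i))

open scoped InnerProductSpace ComplexConjugate
open Function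

section Operators

variable {E : Type*} [NormedAddCommGroup E] [InnerProductSpace ℂ E]

theorem ContinuousLinearMap.IsPositive.apply_eq_zero_of_re_inner_eq_zero [CompleteSpace E]
    {T : E →L[ℂ] E} (hT : T.IsPositive) {x : E} (hx : (⟪x, T x⟫_ℂ).re = 0) : T x = 0 := by
  obtain ⟨S, hS, rfl⟩ : ∃ S : E →L[ℂ] E, IsSelfAdjoint S ∧ T = S * S :=
    ⟨CFC.sqrt T, (CFC.sqrt_nonneg T).isSelfAdjoint,
      (CFC.sqrt_mul_sqrt_self T ((nonneg_iff_isPositive T).mpr hT)).symm⟩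
  have hSS : ⟪S x, S x⟫_ℂ = ⟪x, (S * S) x⟫_ℂ := hS.isSymmetric x (S x)
  rw [← hSS, ← RCLike.re_to_complex, inner_self_eq_norm_sq, sq_eq_zero_iff, norm_eq_zero] at hx
  change S (S x) = 0
  rw [hx, map_zero]

theorem ContinuousLinearMap.IsPositive.apply_eq_zero_of_sum_ite_re_inner_eq_zero
    [CompleteSpace E] {T : E →L[ℂ] E} (hT : T.IsPositive) {ι : Type*} [Fintype ι] {p : ι → Prop}
    [DecidablePred p] {f : ι → E}
    (hsum : ∑ i, (if p i then (⟪f i, T (f i)⟫_ℂ).re else 0) = 0) {i : ι} (hi : p i) :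
    T (f i) = 0 := by
  refine hT.apply_eq_zero_of_re_inner_eq_zero ?_
  have hnonneg : ∀ j ∈ Finset.univ, 0 ≤ if p j then (⟪f j, T (f j)⟫_ℂ).re else 0 := by
    intro j _
    split_ifs
    exacts [hT.re_inner_nonneg_right _, le_rfl]
  simpa [hi] using (Finset.sum_eq_zero_iff_of_nonneg hnonneg).mp hsum i (Finset.mem_univ i)

theorem LinearMap.IsSymmetric.apply_eq_inner_smul_of_orthogonal_ker_le [FiniteDimensional ℂ E]
    {T : E →ₗ[ℂ] E} (hT : T.IsSymmetric) (htr : T.trace ℂ E = 1) {ψ : E} (hψ : ‖ψ‖ = 1)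
    (hker : (LinearMap.ker T)ᗮ ≤ ℂ ∙ ψ) (χ : E) : T χ = ⟪ψ, χ⟫_ℂ • ψ := by
  have hline : ∀ χ, T χ = ⟪ψ, T χ⟫_ℂ • ψ := by
    intro χ
    obtain ⟨c, hc⟩ := Submodule.mem_span_singleton.mp <| hker <|
      (Submodule.mem_orthogonal _ _).mpr fun s hs => by rw [← hT s χ, hs, inner_zero_left]
    rw [← hc, inner_smul_right, inner_self_eq_norm_sq_to_K, hψ]
    simp
  set κ := ⟪ψ, T ψ⟫_ℂ
  have hψκ : T ψ = κ • ψ := hline ψ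
  have hrank : T = conj κ • (InnerProductSpace.rankOne ℂ ψ ψ : E →ₗ[ℂ] E) := by
    ext χ
    rw [hline χ, ← hT ψ χ, hψκ, inner_smul_left]
    simp [mul_smul]
  have hκ : conj κ = 1 := by
    rwa [hrank, map_smul, InnerProductSpace.trace_rankOne, inner_self_eq_norm_sq_to_K, hψ,
      RCLike.ofReal_one, one_pow, smul_eq_mul, mul_one] at htr
  rw [hline χ, ← hT ψ χ, hψκ, inner_smul_left, hκ, one_mul]

theorem Orthonormal.inner_smul_add_smul_conj_sub {e : Fin 2 → E} (he : Orthonormal ℂ e)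
    (a b : ℂ) : ⟪a • e 0 + b • e 1, conj b • e 0 - conj a • e 1⟫_ℂ = 0 := by
  simp only [inner_add_left, inner_sub_right, inner_smul_left, inner_smul_right,
    orthonormal_iff_ite.mp he, one_ne_zero, zero_ne_one, ↓reduceIte, mul_one, mul_zero, add_zero,
    zero_add]
  ring

end Operators

open Fin.NatCast in
theorem Fin.exists_and_not_add_one {n : ℕ} [NeZero n] {p : Fin n → Prop} {i j : Fin n}
    (hi : p i) (hj : ¬p j) : ∃ r, p r ∧ ¬p (r + 1) := by
  by_contra! hstep
  have hall : ∀ k : ℕ, p (i + k) := by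
    intro k
    induction k with
    | zero => simpa using hi
    | succ k ih => simpa [add_assoc] using hstep _ ih
  exact hj (by simpa using hall (j - i).val)

theorem Fin.two_valued_cyclic_induction {n : ℕ} [NeZero n] {P : (Fin n → Fin 2) → Prop}
    (h0 : P 0) (h1 : P 1)
    (hstep : ∀ r x, x r = 0 → x (r + 1) = 0 → P x → P (update x (r + 1) 1))
    (y : Fin n → Fin 2) : P y := by
  induction y using WellFoundedLT.induction with
  | _ y ih =>
  by_cases hy1 : y = 1
  · exact hy1 ▸ h1
  by_cases hy0 : y = 0
  · exact hy0 ▸ h0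
  obtain ⟨i, hi⟩ : ∃ i, y i = 0 := by
    by_contra! h
    exact hy1 (funext fun i => Fin.eq_one_of_ne_zero _ (h i))
  obtain ⟨j, hj⟩ : ∃ j, y j ≠ 0 := by
    by_contra! h
    exact hy0 (funext h)
  obtain ⟨r, hr, hr1⟩ := Fin.exists_and_not_add_one (p := (y · = 0)) hi hj
  have hrr : r + 1 ≠ r := fun h => hr1 (by rwa [h])
  have hlt : update y (r + 1) 0 < y := update_lt_self_iff.mpr (Fin.pos_iff_ne_zero.mpr hr1)
  have := hstep r (update y (r + 1) 0) (by rw [update_of_ne hrr.symm, hr]) (update_self ..)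
    (ih _ hlt)
  rwa [update_idem, update_eq_self_iff.mpr (Fin.eq_one_of_ne_zero _ hr1).symm] at this

section ProductStates

variable {n : ℕ}

theorem inner_prodN (f g : Fin n → EuclideanSpace ℂ (Fin 2)) :
    ⟪prodN f, prodN g⟫_ℂ = ∏ i, ⟪f i, g i⟫_ℂ := by
  simp only [prodN, PiLp.inner_apply, RCLike.inner_apply, WithLp.equiv_symm_apply, map_prod]
  rw [Finset.prod_univ_sum, Fintype.piFinset_univ]
  simp_rw [← Finset.prod_mul_distrib]

theorem prodN_update_smul_add_smul (f : Fin n → EuclideanSpace ℂ (Fin 2)) (s : Fin n) (a b : ℂ)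
    (p q : EuclideanSpace ℂ (Fin 2)) :
    prodN (update f s (a • p + b • q)) = a • prodN (update f s p) + b • prodN (update f s q) := by
  ext x
  simp only [prodN, WithLp.equiv_symm_apply, PiLp.toLp_apply, PiLp.add_apply, PiLp.smul_apply,
    apply_update (fun i (z : EuclideanSpace ℂ (Fin 2)) => z (x i)),
    Finset.prod_update_of_mem (Finset.mem_univ s), smul_eq_mul]
  ring

theorem orthonormal_prodN {v : Fin n → Fin 2 → EuclideanSpace ℂ (Fin 2)}
    (hv : ∀ j, Orthonormal ℂ (v j)) :
    Orthonormal ℂ fun y : Fin n → Fin 2 => prodN (fun i => v i (y i)) := by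
  classical
  refine orthonormal_iff_ite.mpr fun x y => ?_
  simp_rw [inner_prodN, orthonormal_iff_ite.mp (hv _), Finset.prod_boole, funext_iff]
  simp

theorem eq_zero_of_forall_inner_prodN_eq_zero {v : Fin n → Fin 2 → EuclideanSpace ℂ (Fin 2)}
    (hv : ∀ j, Orthonormal ℂ (v j)) {w : EuclideanSpace ℂ (Fin n → Fin 2)}
    (hw : ∀ y : Fin n → Fin 2, ⟪prodN (fun i => v i (y i)), w⟫_ℂ = 0) : w = 0 := by
  let b := basisOfOrthonormalOfCardEqFinrank (orthonormal_prodN hv) (by simp)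
  exact InnerProductSpace.ext_inner_left_basis b fun y => by
    simp [b, coe_basisOfOrthonormalOfCardEqFinrank, hw]

end ProductStates

section Hardy

variable {n : ℕ} {v u : Fin n → Fin 2 → EuclideanSpace ℂ (Fin 2)}

variable (v u) in
noncomputable def hardyVector : EuclideanSpace ℂ (Fin n → Fin 2) :=
  prodN (fun i => u i 1)
    - ⟪prodN (fun i => v i 1), prodN (fun i => u i 1)⟫_ℂ • prodN (fun i => v i 1)

theorem inner_prodN_one_hardyVector (hv : ∀ j, Orthonormal ℂ (v j)) :
    ⟪prodN (fun i => v i 1), hardyVector v u⟫_ℂ = 0 := by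
  have hv1 : ⟪prodN (fun i => v i 1), prodN (fun i => v i 1)⟫_ℂ = 1 := by
    rw [inner_prodN]
    simp [(hv _).1]
  rw [hardyVector, inner_sub_right, inner_smul_right, hv1, mul_one, sub_self]

variable [NeZero n]

variable (v u) in
/-- `|v_r = 1⟩ |u_{r+1} = 1⟩ ⊗ ⨂_{i ≠ r, r+1} |v_i = x_i + 1⟩`; the value `k : Fin 2` stands for
the outcome `k + 1`. -/
noncomputable def hardyState (r : Fin n) (x : Fin n → Fin 2) :
    EuclideanSpace ℂ (Fin n → Fin 2) :=
  prodN fun i => if i = r then v i 0 else if i = r + 1 then u i 0 else v i (x i)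

theorem inner_hardyState_hardyVector (hv : ∀ j, Orthonormal ℂ (v j))
    (hu : ∀ j, ⟪u j 0, u j 1⟫_ℂ = 0) {r : Fin n} (hr : r + 1 ≠ r) (x : Fin n → Fin 2) :
    ⟪hardyState v u r x, hardyVector v u⟫_ℂ = 0 := by
  have hu1 : ⟪hardyState v u r x, prodN (fun i => u i 1)⟫_ℂ = 0 := by
    rw [hardyState, inner_prodN]
    exact Finset.prod_eq_zero (Finset.mem_univ (r + 1)) (by simp [hr, hu])
  have hv1 : ⟪hardyState v u r x, prodN (fun i => v i 1)⟫_ℂ = 0 := by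
    rw [hardyState, inner_prodN]
    exact Finset.prod_eq_zero (Finset.mem_univ r) (by simp [(hv r).inner_eq_zero])
  rw [hardyVector, inner_sub_right, inner_smul_right, hu1, hv1, mul_zero, sub_zero]

theorem inner_prodN_zero_hardyVector (hv : ∀ j, Orthonormal ℂ (v j)) :
    ⟪prodN (fun i => v i 0), hardyVector v u⟫_ℂ = ∏ j, ⟪v j 0, u j 1⟫_ℂ := by
  have hv01 : ⟪prodN (fun i => v i 0), prodN (fun i => v i 1)⟫_ℂ = 0 := by
    rw [inner_prodN]
    exact Finset.prod_eq_zero (Finset.mem_univ 0) ((hv 0).inner_eq_zero (by decide))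
  rw [hardyVector, inner_sub_right, inner_smul_right, hv01, mul_zero, sub_zero, inner_prodN]

theorem hardyState_eq_smul_add_smul {r : Fin n} (hr : r + 1 ≠ r) {x : Fin n → Fin 2}
    (hxr : x r = 0) (hxr1 : x (r + 1) = 0) {a b : ℂ}
    (hu : u (r + 1) 0 = a • v (r + 1) 0 + b • v (r + 1) 1) :
    hardyState v u r x = a • prodN (fun i => v i (x i))
      + b • prodN (fun i => v i (update x (r + 1) 1 i)) := by
  have hstate : (fun i => if i = r then v i 0 else if i = r + 1 then u i 0 else v i (x i))
      = update (fun i => v i (x i)) (r + 1) (u (r + 1) 0) := by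
    ext1 i
    rcases eq_or_ne i (r + 1) with rfl | hi
    · simp [hr]
    · rcases eq_or_ne i r with rfl | hir <;> simp [*]
  have hslot : ∀ k, update (fun i => v i (x i)) (r + 1) (v (r + 1) k)
      = fun i => v i (update x (r + 1) k i) :=
    fun k => funext fun i => (apply_update (fun i k => v i k) x (r + 1) k i).symm
  rw [hardyState, hstate, hu, prodN_update_smul_add_smul, hslot, hslot,
    update_eq_self_iff.mpr hxr1.symm]

theorem eq_zero_of_orthogonal_hardy (hv : ∀ j, Orthonormal ℂ (v j))
    (hr : ∀ r : Fin n, r + 1 ≠ r) {α β : Fin n → ℂ} (hβ : ∀ j, β j ≠ 0)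
    (hu : ∀ j, u j 0 = α j • v j 0 + β j • v j 1) {w : EuclideanSpace ℂ (Fin n → Fin 2)}
    (hw : ∀ r x, x r = 0 → x (r + 1) = 0 → ⟪hardyState v u r x, w⟫_ℂ = 0)
    (hw0 : ⟪prodN (fun i => v i 0), w⟫_ℂ = 0) (hw1 : ⟪prodN (fun i => v i 1), w⟫_ℂ = 0) :
    w = 0 := by
  refine eq_zero_of_forall_inner_prodN_eq_zero hv
    (Fin.two_valued_cyclic_induction hw0 hw1 fun r x hxr hxr1 hx => ?_)
  have := hw r x hxr hxr1
  rw [hardyState_eq_smul_add_smul (hr r) hxr hxr1 (hu _), inner_add_left, inner_smul_left,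
    inner_smul_left, hx, mul_zero, zero_add] at this
  exact (mul_eq_zero.mp this).resolve_left (by simpa using hβ _)

theorem eq_smul_hardyVector_of_orthogonal (hv : ∀ j, Orthonormal ℂ (v j))
    (hr : ∀ r : Fin n, r + 1 ≠ r) {α β : Fin n → ℂ} (hβ : ∀ j, β j ≠ 0)
    (hu0 : ∀ j, u j 0 = α j • v j 0 + β j • v j 1) (hu : ∀ j, ⟪u j 0, u j 1⟫_ℂ = 0)
    (hvu : ∀ j, ⟪v j 0, u j 1⟫_ℂ ≠ 0) {w : EuclideanSpace ℂ (Fin n → Fin 2)}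
    (hw : ∀ r x, x r = 0 → x (r + 1) = 0 → ⟪hardyState v u r x, w⟫_ℂ = 0)
    (hw1 : ⟪prodN (fun i => v i 1), w⟫_ℂ = 0) :
    ∃ c : ℂ, w = c • hardyVector v u := by
  set c := ⟪prodN (fun i => v i 0), w⟫_ℂ / ∏ j, ⟪v j 0, u j 1⟫_ℂ
  refine ⟨c, sub_eq_zero.mp (eq_zero_of_orthogonal_hardy hv hr hβ hu0 (fun r x hxr hxr1 => ?_)
    ?_ ?_)⟩
  · rw [inner_sub_right, hw r x hxr hxr1, inner_smul_right,
      inner_hardyState_hardyVector hv hu (hr r), mul_zero, sub_zero]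
  · rw [inner_sub_right, inner_smul_right, inner_prodN_zero_hardyVector hv,
      div_mul_cancel₀ _ (Finset.prod_ne_zero_iff.mpr fun j _ => hvu j), sub_self]
  · rw [inner_sub_right, hw1, inner_smul_right, inner_prodN_one_hardyVector hv]
    simp

theorem exists_unit_orthogonal_hardy (hv : ∀ j, Orthonormal ℂ (v j))
    (hr : ∀ r : Fin n, r + 1 ≠ r) {α β : Fin n → ℂ} (hβ : ∀ j, β j ≠ 0)
    (hu0 : ∀ j, u j 0 = α j • v j 0 + β j • v j 1)
    (hu1 : ∀ j, u j 1 = conj (β j) • v j 0 - conj (α j) • v j 1) :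
    ∃ ψ : EuclideanSpace ℂ (Fin n → Fin 2), ‖ψ‖ = 1 ∧
      (∀ r x, ⟪hardyState v u r x, ψ⟫_ℂ = 0) ∧ ⟪prodN (fun i => v i 1), ψ⟫_ℂ = 0 ∧
      ∀ w, (∀ r x, x r = 0 → x (r + 1) = 0 → ⟪hardyState v u r x, w⟫_ℂ = 0) →
        ⟪prodN (fun i => v i 1), w⟫_ℂ = 0 → ∃ c : ℂ, w = c • ψ := by
  have hu : ∀ j, ⟪u j 0, u j 1⟫_ℂ = 0 := fun j => by
    rw [hu0, hu1]
    exact (hv j).inner_smul_add_smul_conj_sub _ _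
  have hvu : ∀ j, ⟪v j 0, u j 1⟫_ℂ ≠ 0 := fun j => by
    simpa [hu1, inner_sub_right, inner_smul_right, (hv j).1, (hv j).inner_eq_zero] using hβ j
  have hψ₀ : hardyVector v u ≠ 0 := fun h => Finset.prod_ne_zero_iff.mpr (fun j _ => hvu j)
    (by rw [← inner_prodN_zero_hardyVector hv, h, inner_zero_right])
  refine ⟨(‖hardyVector v u‖ : ℂ)⁻¹ • hardyVector v u, by simp [norm_smul, hψ₀],
    fun r x => by simp [inner_hardyState_hardyVector hv hu (hr r)],
    by simp [inner_prodN_one_hardyVector hv], fun w hw hw1 => ?_⟩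
  obtain ⟨c, rfl⟩ := eq_smul_hardyVector_of_orthogonal hv hr hβ hu0 hu hvu hw hw1
  exact ⟨c * ‖hardyVector v u‖, by simp [smul_smul, hψ₀]⟩

end Hardy

theorem statement15_general (n : ℕ) (hn : 2 ≤ n)
    (v u : Fin n → Fin 2 → EuclideanSpace ℂ (Fin 2))
    (hv : ∀ j, Orthonormal ℂ (v j))
    (α β : Fin n → ℂ)
    (hβ : ∀ j, 0 < ‖β j‖ ∧ ‖β j‖ < 1)
    (hu0 : ∀ j, u j 0 = α j • v j 0 + β j • v j 1)
    (hu1 : ∀ j, u j 1 = (starRingEnd ℂ) (β j) • v j 0 - (starRingEnd ℂ) (α j) • v j 1)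
    (next : Fin n → Fin n)
    (hnext : ∀ r : Fin n, (next r).1 = (r.1 + 1) % n)
    -- the product states associated with the zero-probability conditions
    (Φ : Fin n → (Fin n → Fin 2) → EuclideanSpace ℂ (Fin n → Fin 2))
    (hΦ : ∀ r x, Φ r x = prodN (fun i =>
      if i = r then v i 0 else if i = next r then u i 0 else v i (x i)))
    -- `ρ` is a density operator:
    (ρ : EuclideanSpace ℂ (Fin n → Fin 2) →L[ℂ] EuclideanSpace ℂ (Fin n → Fin 2))
    (hρpos : ρ.IsPositive)
    (hρtr : LinearMap.trace ℂ _ (ρ : EuclideanSpace ℂ (Fin n → Fin 2) →ₗ[ℂ]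
      EuclideanSpace ℂ (Fin n → Fin 2)) = 1)
    -- the modified Hardy conditions:
    (q : ℝ)
    (h1 : (inner ℂ (prodN (fun i => u i 0)) (ρ (prodN (fun i => u i 0))) : ℂ).re = q)
    (h2 : ∀ r : Fin n, ∑ x : Fin n → Fin 2,
      (if x r = 0 ∧ x (next r) = 0 then (inner ℂ (Φ r x) (ρ (Φ r x)) : ℂ).re else 0) = 0)
    (h3 : (inner ℂ (prodN (fun i => v i 1)) (ρ (prodN (fun i => v i 1))) : ℂ).re = 0) :
    ∃ ψ : EuclideanSpace ℂ (Fin n → Fin 2), ‖ψ‖ = 1 ∧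
      -- `ρ` is the pure state `|ψ⟩⟨ψ|`
      (∀ χ, ρ χ = (inner ℂ ψ χ : ℂ) • ψ) ∧
      -- `ψ` is orthogonal to all product states of the zero conditions
      (∀ r x, (inner ℂ (Φ r x) ψ : ℂ) = 0) ∧ (inner ℂ (prodN (fun i => v i 1)) ψ : ℂ) = 0 ∧
      -- `ψ` is unique up to a phase among such vectors
      (∀ ψ' : EuclideanSpace ℂ (Fin n → Fin 2), ‖ψ'‖ = 1 →
        (∀ r x, (inner ℂ (Φ r x) ψ' : ℂ) = 0) →
        (inner ℂ (prodN (fun i => v i 1)) ψ' : ℂ) = 0 →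
        ∃ c : ℂ, ‖c‖ = 1 ∧ ψ' = c • ψ) ∧
      q = ‖(inner ℂ ψ (prodN (fun i => u i 0)) : ℂ)‖ ^ 2 := by
  have : NeZero n := ⟨by omega⟩
  obtain rfl : next = (· + 1) := funext fun r => Fin.ext <| by
    rw [hnext, Fin.val_add, Fin.val_one', Nat.one_mod_eq_one.mpr (by omega)]
  obtain rfl : Φ = hardyState v u := funext₂ hΦ
  have hr : ∀ r : Fin n, r + 1 ≠ r := fun r => by
    simp only [ne_eq, add_eq_left, Fin.one_eq_zero_iff]; omega
  obtain ⟨ψ, hψ, hψΦ, hψ1, hline⟩ := exists_unit_orthogonal_hardy hv hr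
    (fun j => norm_pos_iff.mp (hβ j).1) hu0 hu1
  have hρΦ : ∀ r x, x r = 0 → x (r + 1) = 0 → ρ (hardyState v u r x) = 0 :=
    fun r x hxr hxr1 => hρpos.apply_eq_zero_of_sum_ite_re_inner_eq_zero (h2 r) ⟨hxr, hxr1⟩
  have hρ : ∀ χ, ρ χ = ⟪ψ, χ⟫_ℂ • ψ := by
    refine hρpos.isSymmetric.apply_eq_inner_smul_of_orthogonal_ker_le hρtr hψ fun w hw => ?_
    have hw := (Submodule.mem_orthogonal _ _).mp hw
    obtain ⟨c, rfl⟩ := hline w (fun r x hxr hxr1 => hw _ (hρΦ r x hxr hxr1))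
      (hw _ (hρpos.apply_eq_zero_of_re_inner_eq_zero h3))
    exact Submodule.smul_mem _ c (Submodule.mem_span_singleton_self ψ)
  refine ⟨ψ, hψ, hρ, hψΦ, hψ1, fun ψ' hψ' hΦ' h1' => ?_, ?_⟩
  · obtain ⟨c, rfl⟩ := hline ψ' (fun r x _ _ => hΦ' r x) h1'
    exact ⟨c, by simpa [norm_smul, hψ] using hψ', rfl⟩
  · rw [← h1, hρ, inner_smul_right, ← inner_conj_symm (prodN fun i => u i 0) ψ,
      Complex.mul_conj']
    norm_cast

/-- For `n` qubits, any density operator `ρ` on `(ℂ²)^{⊗n}`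
satisfying the modified Hardy conditions (`P(∀ i : u_i = 1) = q > 0`;
`P(v_r = 1, u_{r+1} = 1) = 0` cyclically for all `r`; `P(∀ i : v_i = 2) = 0`,
probabilities by the Born rule, marginals computed by summing over a product
basis of the other parties) is a unique pure state `ρ = |ψ⟩⟨ψ|`, where `|ψ⟩`
spans the orthogonal complement of the subspace spanned by the product states
associated with the zero-probability conditions, and `q = |⟨ψ|φ_+⟩|²` with
`|φ_+⟩ = |u_1=1⟩⋯|u_n=1⟩`.
(Indexing: `|v_j=1⟩ = v j 0`, `|v_j=2⟩ = v j 1`, similarly for `u`.) -/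
theorem statement15 (n : ℕ) (hn : 2 ≤ n)
    (v u : Fin n → Fin 2 → EuclideanSpace ℂ (Fin 2))
    (hv : ∀ j, Orthonormal ℂ (v j))
    (α β : Fin n → ℂ)
    (hnorm : ∀ j, ‖α j‖ ^ 2 + ‖β j‖ ^ 2 = 1)
    (hα : ∀ j, 0 < ‖α j‖ ∧ ‖α j‖ < 1)
    (hβ : ∀ j, 0 < ‖β j‖ ∧ ‖β j‖ < 1)
    (hu0 : ∀ j, u j 0 = α j • v j 0 + β j • v j 1)
    (hu1 : ∀ j, u j 1 = (starRingEnd ℂ) (β j) • v j 0 - (starRingEnd ℂ) (α j) • v j 1)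
    (next : Fin n → Fin n)
    (hnext : ∀ r : Fin n, (next r).1 = (r.1 + 1) % n)
    -- the product states associated with the zero-probability conditions
    (Φ : Fin n → (Fin n → Fin 2) → EuclideanSpace ℂ (Fin n → Fin 2))
    (hΦ : ∀ r x, Φ r x = prodN (fun i =>
      if i = r then v i 0 else if i = next r then u i 0 else v i (x i)))
    -- `ρ` is a density operator:
    (ρ : EuclideanSpace ℂ (Fin n → Fin 2) →L[ℂ] EuclideanSpace ℂ (Fin n → Fin 2))
    (hρpos : ρ.IsPositive)
    (hρtr : LinearMap.trace ℂ _ (ρ : EuclideanSpace ℂ (Fin n → Fin 2) →ₗ[ℂ]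
      EuclideanSpace ℂ (Fin n → Fin 2)) = 1)
    -- the modified Hardy conditions:
    (q : ℝ) (hq : 0 < q)
    (h1 : (inner ℂ (prodN (fun i => u i 0)) (ρ (prodN (fun i => u i 0))) : ℂ).re = q)
    (h2 : ∀ r : Fin n, ∑ x : Fin n → Fin 2,
      (if x r = 0 ∧ x (next r) = 0 then (inner ℂ (Φ r x) (ρ (Φ r x)) : ℂ).re else 0) = 0)
    (h3 : (inner ℂ (prodN (fun i => v i 1)) (ρ (prodN (fun i => v i 1))) : ℂ).re = 0) :
    ∃ ψ : EuclideanSpace ℂ (Fin n → Fin 2), ‖ψ‖ = 1 ∧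
      -- `ρ` is the pure state `|ψ⟩⟨ψ|`
      (∀ χ, ρ χ = (inner ℂ ψ χ : ℂ) • ψ) ∧
      -- `ψ` is orthogonal to all product states of the zero conditions
      (∀ r x, (inner ℂ (Φ r x) ψ : ℂ) = 0) ∧ (inner ℂ (prodN (fun i => v i 1)) ψ : ℂ) = 0 ∧
      -- `ψ` is unique up to a phase among such vectors
      (∀ ψ' : EuclideanSpace ℂ (Fin n → Fin 2), ‖ψ'‖ = 1 →
        (∀ r x, (inner ℂ (Φ r x) ψ' : ℂ) = 0) →
        (inner ℂ (prodN (fun i => v i 1)) ψ' : ℂ) = 0 →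
        ∃ c : ℂ, ‖c‖ = 1 ∧ ψ' = c • ψ) ∧
      q = ‖(inner ℂ ψ (prodN (fun i => u i 0)) : ℂ)‖ ^ 2 :=
  statement15_general n hn v u hv α β hβ hu0 hu1 next hnext Φ hΦ ρ hρpos hρtr q h1 h2 h3
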